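/- arXiv:2211.10835 — 5 statements merged into one kernel-verified Lean document; each statement's English description precedes it below -/
import Mathlib

section
/- Let p > 2 be a real number, let c_a, c_c > 0 be constants, let r_a be an accuracy rate and r_c a cost rate, and assume that c_a·r_a''(n) + c_c·r_c''(n) > 0 for all n in [1, p−1]. Then the function u1 : [1, p−1] → (0, ∞), u1(n) = (c_a·r_a(n) + c_c·r_c(n))/(p − n), attains its global minimum over [1, p−1] at a unique point n1* ∈ [1, p−1]; that is, there exists n1* ∈ [1, p−1] with u1(n1*) ≤ u1(n) for all n ∈ [1, p−1], and u1(n1*) < u1(n) for every n ∈ [1, p−1] with n ≠ n1*. (Proposition 3.1) -/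
open Set Topology

/-!
With `f = cₐ·rₐ + c_c·r_c`, condition (3.8) makes `f` strictly convex on `[1, p − 1]`. For every
level `t`, `n ↦ f n - t (p - n)` is then strictly convex too, so `f n / (p - n)` is strictly
quasiconvex: inside a segment it stays strictly below its larger endpoint value. Two distinct
minimisers would violate this at their midpoint, and a minimiser exists by compactness.
-/

theorem StrictConvexOn.div_const_sub_lt_max {s : Set ℝ} {f : ℝ → ℝ} {p : ℝ}
    (hf : StrictConvexOn ℝ s f) (hsp : ∀ x ∈ s, x < p) {x y : ℝ} (hx : x ∈ s) (hy : y ∈ s)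
    (hxy : x ≠ y) {a b : ℝ} (ha : 0 < a) (hb : 0 < b) (hab : a + b = 1) :
    f (a • x + b • y) / (p - (a • x + b • y)) < max (f x / (p - x)) (f y / (p - y)) := by
  set t := max (f x / (p - x)) (f y / (p - y))
  have hz : a • x + b • y ∈ s := hf.1 hx hy ha.le hb.le hab
  have hgx : f x ≤ t * (p - x) := (div_le_iff₀ (sub_pos.2 (hsp x hx))).1 (le_max_left _ _)
  have hgy : f y ≤ t * (p - y) := (div_le_iff₀ (sub_pos.2 (hsp y hy))).1 (le_max_right _ _)
  rw [div_lt_iff₀ (sub_pos.2 (hsp _ hz))]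
  calc f (a • x + b • y) < a • f x + b • f y := hf.2 hx hy hxy ha hb hab
    _ ≤ a * (t * (p - x)) + b * (t * (p - y)) := by simp only [smul_eq_mul]; gcongr
    _ = t * (p - (a • x + b • y)) := by simp only [smul_eq_mul]; linear_combination t * p * hab

theorem StrictConvexOn.eq_of_isMinOn_div_const_sub {s : Set ℝ} {f : ℝ → ℝ} {p : ℝ}
    (hf : StrictConvexOn ℝ s f) (hsp : ∀ x ∈ s, x < p) {x y : ℝ} (hx : x ∈ s) (hy : y ∈ s)
    (hmin_x : IsMinOn (fun z => f z / (p - z)) s x)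
    (hmin_y : IsMinOn (fun z => f z / (p - z)) s y) : x = y := by
  by_contra hxy
  have hmid := hf.1 hx hy one_half_pos.le one_half_pos.le (add_halves 1)
  exact (max_le (hmin_x hmid) (hmin_y hmid)).not_gt
    (hf.div_const_sub_lt_max hsp hx hy hxy one_half_pos one_half_pos (add_halves 1))

theorem iterate_deriv_const_mul_add_const_mul {f g : ℝ → ℝ} {n : ℕ} {x : ℝ} (a b : ℝ)
    (hf : ContDiffAt ℝ n f x) (hg : ContDiffAt ℝ n g x) :
    deriv^[n] (fun y => a * f y + b * g y) x = a * deriv^[n] f x + b * deriv^[n] g x := by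
  simp only [← iteratedDeriv_eq_iterate]
  rw [iteratedDeriv_fun_add (contDiffAt_const.mul hf) (contDiffAt_const.mul hg),
    iteratedDeriv_const_mul_field, iteratedDeriv_const_mul_field]

theorem stmt_0_general
    (p ca cc : ℝ) (ra rc : ℝ → ℝ)
    (hp : 2 < p)
    -- `ra` is an accuracy rate: positive, decreasing, twice continuously differentiable on `(0, ∞)`
    (hra_smooth : ContDiffOn ℝ 2 ra (Ioi 0))
    -- `rc` is a cost rate: positive, increasing, twice continuously differentiable on `(0, ∞)`
    (hrc_smooth : ContDiffOn ℝ 2 rc (Ioi 0))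
    -- strict convexity condition (3.8)
    (hconv : ∀ n ∈ Icc (1 : ℝ) (p - 1),
      0 < ca * deriv (deriv ra) n + cc * deriv (deriv rc) n) :
    ∃ n₁ ∈ Icc (1 : ℝ) (p - 1),
      (∀ n ∈ Icc (1 : ℝ) (p - 1),
        (ca * ra n₁ + cc * rc n₁) / (p - n₁) ≤ (ca * ra n + cc * rc n) / (p - n)) ∧
      (∀ n ∈ Icc (1 : ℝ) (p - 1), n ≠ n₁ →
        (ca * ra n₁ + cc * rc n₁) / (p - n₁) < (ca * ra n + cc * rc n) / (p - n)) := by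
  set f : ℝ → ℝ := fun x => ca * ra x + cc * rc x
  have hsp : ∀ x ∈ Icc (1 : ℝ) (p - 1), x < p := fun x hx => by linarith [hx.2]
  have hpos : Icc (1 : ℝ) (p - 1) ⊆ Ioi 0 := fun x hx => lt_of_lt_of_le one_pos hx.1
  have hf_smooth : ContDiffOn ℝ 2 f (Ioi 0) :=
    (contDiffOn_const.mul hra_smooth).add (contDiffOn_const.mul hrc_smooth)
  have hf_convex : StrictConvexOn ℝ (Icc 1 (p - 1)) f := by
    refine strictConvexOn_of_deriv2_pos' (convex_Icc _ _) (hf_smooth.continuousOn.mono hpos)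
      fun x hx => ?_
    have hx₀ : Ioi (0 : ℝ) ∈ 𝓝 x := isOpen_Ioi.mem_nhds (hpos hx)
    rw [iterate_deriv_const_mul_add_const_mul ca cc (hra_smooth.contDiffAt hx₀)
      (hrc_smooth.contDiffAt hx₀)]
    exact hconv x hx
  have hu_cont : ContinuousOn (fun x => f x / (p - x)) (Icc 1 (p - 1)) :=
    (hf_smooth.continuousOn.mono hpos).div (continuousOn_const.sub continuousOn_id)
      fun x hx => (sub_pos.2 (hsp x hx)).ne'
  obtain ⟨n₁, hn₁, hmin⟩ := isCompact_Icc.exists_isMinOn ⟨1, le_rfl, by linarith⟩ hu_cont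
  refine ⟨n₁, hn₁, fun n hn => hmin hn, fun n hn hne => lt_of_not_ge fun hle => hne ?_⟩
  exact hf_convex.eq_of_isMinOn_div_const_sub hsp hn hn₁
    (fun m hm => hle.trans (hmin hm)) hmin

/-- Proposition 3.1: existence and uniqueness of the global minimizer of the
context-aware objective `u₁(n) = (cₐ·rₐ(n) + c_c·r_c(n))/(p − n)` on `[1, p−1]`. -/
theorem stmt_0
    (p ca cc : ℝ) (ra rc : ℝ → ℝ)
    (hp : 2 < p) (hca : 0 < ca) (hcc : 0 < cc)
    -- `ra` is an accuracy rate: positive, decreasing, twice continuously differentiable on `(0, ∞)`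
    (hra_pos : ∀ x ∈ Ioi (0 : ℝ), 0 < ra x)
    (hra_anti : StrictAntiOn ra (Ioi 0))
    (hra_smooth : ContDiffOn ℝ 2 ra (Ioi 0))
    -- `rc` is a cost rate: positive, increasing, twice continuously differentiable on `(0, ∞)`
    (hrc_pos : ∀ x ∈ Ioi (0 : ℝ), 0 < rc x)
    (hrc_mono : StrictMonoOn rc (Ioi 0))
    (hrc_smooth : ContDiffOn ℝ 2 rc (Ioi 0))
    -- strict convexity condition (3.8)
    (hconv : ∀ n ∈ Icc (1 : ℝ) (p - 1),
      0 < ca * deriv (deriv ra) n + cc * deriv (deriv rc) n) :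
    ∃ n₁ ∈ Icc (1 : ℝ) (p - 1),
      (∀ n ∈ Icc (1 : ℝ) (p - 1),
        (ca * ra n₁ + cc * rc n₁) / (p - n₁) ≤ (ca * ra n + cc * rc n) / (p - n)) ∧
      (∀ n ∈ Icc (1 : ℝ) (p - 1), n ≠ n₁ →
        (ca * ra n₁ + cc * rc n₁) / (p - n₁) < (ca * ra n + cc * rc n) / (p - n)) :=
  stmt_0_general p ca cc ra rc hp hra_smooth hrc_smooth hconv
end

section
/- Let c_a, c_c > 0 be constants, let r_a be an accuracy rate and r_c a cost rate, and assume that c_a·r_a''(n) + c_c·r_c''(n) > 0 for all n ∈ (0, ∞). Suppose there exists n̄ ∈ (0, ∞) such that c_a·r_a'(n̄) + c_c·r_c'(n̄) = 0. Then n̄ is the unique zero of the function n ↦ c_a·r_a'(n) + c_c·r_c'(n) on (0, ∞), and for every budget p > 2, any global minimizer n1* on [1, p−1] of the function u1(n) = (c_a·r_a(n) + c_c·r_c(n))/(p − n) satisfies n1* ≤ max{1, n̄}; in particular the minimizer is bounded from above independently of the budget p. (Proposition 3.2) -/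
/-!
The numerator `g = cₐ·rₐ + c_c·r_c` of `u₁` is strictly convex, so `g'` is strictly
increasing: it vanishes only at `n̄`, and `g` is strictly increasing on `[n̄, ∞)`. If a
minimizer `n₁` exceeded `m = max 1 n̄`, then moving from `n₁` down to `m` would decrease the
positive numerator and increase the positive denominator `p - n`, strictly decreasing `u₁`.
-/

open Set

section StrictConvexity

variable {s : Set ℝ} {g g' : ℝ → ℝ}

theorem strictMonoOn_of_hasDerivAt_pos (hs : Convex ℝ s)
    (hg : ∀ x ∈ s, HasDerivAt g (g' x) x) (hpos : ∀ x ∈ interior s, 0 < g' x) :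
    StrictMonoOn g s :=
  strictMonoOn_of_hasDerivWithinAt_pos hs (fun x hx => (hg x hx).continuousAt.continuousWithinAt)
    (fun x hx => (hg x (interior_subset hx)).hasDerivWithinAt) hpos

theorem strictMonoOn_inter_Ici_of_hasDerivAt_of_eq_zero (hs : Convex ℝ s)
    (hg : ∀ x ∈ s, HasDerivAt g (g' x) x) (hg' : StrictMonoOn g' s)
    {x₀ : ℝ} (hx₀ : x₀ ∈ s) (hstat : g' x₀ = 0) :
    StrictMonoOn g (s ∩ Ici x₀) := by
  refine strictMonoOn_of_hasDerivAt_pos (hs.inter (convex_Ici x₀))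
    (fun x hx => hg x hx.1) fun x hx => ?_
  rw [interior_inter, interior_Ici] at hx
  exact hstat ▸ hg' hx₀ (interior_subset hx.1) hx.2

end StrictConvexity

theorem ContDiffOn.differentiableAt_deriv_of_isOpen {r : ℝ → ℝ} {s : Set ℝ}
    (hr : ContDiffOn ℝ 2 r s) (hs : IsOpen s) {x : ℝ} (hx : x ∈ s) :
    DifferentiableAt ℝ (deriv r) x :=
  ((hr.deriv_of_isOpen hs (m := 1) le_rfl).contDiffAt (hs.mem_nhds hx)).differentiableAt
    one_ne_zero

theorem stmt_1_general
    (ca cc : ℝ) (ra rc : ℝ → ℝ) (nbar : ℝ)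
    (hca : 0 < ca) (hcc : 0 < cc)
    -- `ra` is an accuracy rate: positive, decreasing, twice continuously differentiable on `(0, ∞)`
    (hra_pos : ∀ x ∈ Ioi (0 : ℝ), 0 < ra x)
    (hra_smooth : ContDiffOn ℝ 2 ra (Ioi 0))
    -- `rc` is a cost rate: positive, increasing, twice continuously differentiable on `(0, ∞)`
    (hrc_pos : ∀ x ∈ Ioi (0 : ℝ), 0 < rc x)
    (hrc_smooth : ContDiffOn ℝ 2 rc (Ioi 0))
    -- strict convexity on all of `(0, ∞)`
    (hconv : ∀ n ∈ Ioi (0 : ℝ),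
      0 < ca * deriv (deriv ra) n + cc * deriv (deriv rc) n)
    -- existence of a stationary point `n̄` of the numerator
    (hnbar : nbar ∈ Ioi (0 : ℝ))
    (hstat : ca * deriv ra nbar + cc * deriv rc nbar = 0) :
    (∀ m ∈ Ioi (0 : ℝ), ca * deriv ra m + cc * deriv rc m = 0 → m = nbar) ∧
    (∀ p : ℝ, 2 < p → ∀ n₁ ∈ Icc (1 : ℝ) (p - 1),
      (∀ n ∈ Icc (1 : ℝ) (p - 1),
        (ca * ra n₁ + cc * rc n₁) / (p - n₁) ≤ (ca * ra n + cc * rc n) / (p - n)) →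
      n₁ ≤ max 1 nbar) := by
  have hg : ∀ x ∈ Ioi (0 : ℝ), HasDerivAt (fun n => ca * ra n + cc * rc n)
      (ca * deriv ra x + cc * deriv rc x) x := fun x hx =>
    have hx' := isOpen_Ioi.mem_nhds hx
    (((hra_smooth.contDiffAt hx').differentiableAt two_ne_zero).hasDerivAt.const_mul ca).add
      (((hrc_smooth.contDiffAt hx').differentiableAt two_ne_zero).hasDerivAt.const_mul cc)
  have hg' : StrictMonoOn (fun n => ca * deriv ra n + cc * deriv rc n) (Ioi 0) :=
    strictMonoOn_of_hasDerivAt_pos (convex_Ioi 0)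
      (fun x hx =>
        ((hra_smooth.differentiableAt_deriv_of_isOpen isOpen_Ioi hx).hasDerivAt.const_mul ca).add
          ((hrc_smooth.differentiableAt_deriv_of_isOpen isOpen_Ioi hx).hasDerivAt.const_mul cc))
      (fun x hx => hconv x (interior_subset hx))
  refine ⟨fun m hm hm0 => hg'.injOn hm hnbar (hm0.trans hstat.symm), ?_⟩
  intro p _ n₁ hn₁ hmin
  by_contra! hgt
  set m := max 1 nbar
  have hm : m ∈ Ioi 0 ∩ Ici nbar :=
    ⟨zero_lt_one.trans_le (le_max_left 1 nbar), le_max_right 1 nbar⟩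
  have hn₁' : n₁ ∈ Ioi 0 ∩ Ici nbar := ⟨hm.1.trans hgt, hm.2.trans hgt.le⟩
  have hgrow : ca * ra m + cc * rc m < ca * ra n₁ + cc * rc n₁ :=
    strictMonoOn_inter_Ici_of_hasDerivAt_of_eq_zero (convex_Ioi 0) hg hg' hnbar hstat hm hn₁' hgt
  have hpos : 0 < ca * ra n₁ + cc * rc n₁ := by
    have := hra_pos n₁ hn₁'.1
    have := hrc_pos n₁ hn₁'.1
    positivity
  have hlt := div_lt_div₀ hgrow (sub_le_sub_left hgt.le p) hpos.le (by linarith [hn₁.2])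
  exact (hmin m ⟨le_max_left 1 nbar, hgt.le.trans hn₁.2⟩).not_gt hlt

/-- Proposition 3.2: the stationary point `n̄` of `n ↦ cₐ·rₐ'(n) + c_c·r_c'(n)` is unique,
and for every budget `p > 2` any global minimizer of `u₁` on `[1, p−1]` is bounded above by
`max 1 n̄`, independently of `p`. -/
theorem stmt_1
    (ca cc : ℝ) (ra rc : ℝ → ℝ) (nbar : ℝ)
    (hca : 0 < ca) (hcc : 0 < cc)
    -- `ra` is an accuracy rate: positive, decreasing, twice continuously differentiable on `(0, ∞)`
    (hra_pos : ∀ x ∈ Ioi (0 : ℝ), 0 < ra x)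
    (hra_anti : StrictAntiOn ra (Ioi 0))
    (hra_smooth : ContDiffOn ℝ 2 ra (Ioi 0))
    -- `rc` is a cost rate: positive, increasing, twice continuously differentiable on `(0, ∞)`
    (hrc_pos : ∀ x ∈ Ioi (0 : ℝ), 0 < rc x)
    (hrc_mono : StrictMonoOn rc (Ioi 0))
    (hrc_smooth : ContDiffOn ℝ 2 rc (Ioi 0))
    -- strict convexity on all of `(0, ∞)`
    (hconv : ∀ n ∈ Ioi (0 : ℝ),
      0 < ca * deriv (deriv ra) n + cc * deriv (deriv rc) n)
    -- existence of a stationary point `n̄` of the numerator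
    (hnbar : nbar ∈ Ioi (0 : ℝ))
    (hstat : ca * deriv ra nbar + cc * deriv rc nbar = 0) :
    (∀ m ∈ Ioi (0 : ℝ), ca * deriv ra m + cc * deriv rc m = 0 → m = nbar) ∧
    (∀ p : ℝ, 2 < p → ∀ n₁ ∈ Icc (1 : ℝ) (p - 1),
      (∀ n ∈ Icc (1 : ℝ) (p - 1),
        (ca * ra n₁ + cc * rc n₁) / (p - n₁) ≤ (ca * ra n + cc * rc n) / (p - n)) →
      n₁ ≤ max 1 nbar) :=
  stmt_1_general ca cc ra rc nbar hca hcc hra_pos hra_smooth hrc_pos hrc_smooth hconv hnbar hstat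
end

section
/- Let k ≥ 1 be an integer, let σ0² ≥ 0, let p ∈ ℝ and n_1, …, n_k > 0 with n_1 + ⋯ + n_k < p. Let w_0 = 1 and w_1, …, w_k > 0, and let ρ_0, ρ_1, …, ρ_k ∈ ℝ satisfy ρ_0² = 1 and ρ_j² ≤ ρ_{j−1}² for j = 1, …, k; set ρ_{k+1} = 0. Let c_{a,k}, c_{c,k} > 0 and r_{a,k}(n_k), r_{c,k}(n_k) > 0 be such that 1 − ρ_k² ≤ c_{a,k}·r_{a,k}(n_k) and w_k ≤ c_{c,k}·r_{c,k}(n_k). Then, with p_{k−1} = p − (n_1 + ⋯ + n_{k−1}) and κ_{k−1} = Σ_{j=0}^{k−2} w_j·(1 − ρ_{j+1}²) (with κ_0 = 0), it holds that (σ0²/(p − Σ_{j=1}^k n_j)) · ( Σ_{j=0}^k √( w_j·(ρ_j² − ρ_{j+1}²) ) )² ≤ ((k+1)·σ0²/(p_{k−1} − n_k)) · ( κ_{k−1} + w_{k−1}·c_{a,k}·r_{a,k}(n_k) + c_{c,k}·r_{c,k}(n_k) ). (Lemma 3.3) -/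
open Set Finset

/-- Lemma 3.3: upper bound of the MSE of the CA-MFMC estimator with `k` low-fidelity models. -/
theorem stmt_2
    (k : ℕ) (hk : 1 ≤ k)
    (σ0sq : ℝ) (hσ : 0 ≤ σ0sq)
    (p : ℝ) (n : ℕ → ℝ)
    (hn_pos : ∀ j ∈ Finset.Icc 1 k, 0 < n j)
    (hn_sum : ∑ j ∈ Finset.Icc 1 k, n j < p)
    (w : ℕ → ℝ) (hw0 : w 0 = 1)
    (hw_pos : ∀ j ∈ Finset.Icc 1 k, 0 < w j)
    (ρ : ℕ → ℝ) (hρ0 : ρ 0 ^ 2 = 1)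
    (hρ_mono : ∀ j ∈ Finset.Icc 1 k, ρ j ^ 2 ≤ ρ (j - 1) ^ 2)
    (hρ_last : ρ (k + 1) = 0)
    (cak cck rak rck : ℝ)
    (hcak : 0 < cak) (hcck : 0 < cck) (hrak : 0 < rak) (hrck : 0 < rck)
    (hacc : 1 - ρ k ^ 2 ≤ cak * rak)
    (hcost : w k ≤ cck * rck) :
    σ0sq / (p - ∑ j ∈ Finset.Icc 1 k, n j) *
        (∑ j ∈ Finset.range (k + 1), Real.sqrt (w j * (ρ j ^ 2 - ρ (j + 1) ^ 2))) ^ 2 ≤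
      (k + 1) * σ0sq / ((p - ∑ j ∈ Finset.Icc 1 (k - 1), n j) - n k) *
        ((∑ j ∈ Finset.range (k - 1), w j * (1 - ρ (j + 1) ^ 2)) +
          w (k - 1) * (cak * rak) + cck * rck) := by
  -- denominators coincide
  have hsum_split : ∑ j ∈ Finset.Icc 1 k, n j
      = ∑ j ∈ Finset.Icc 1 (k - 1), n j + n k := by
    have hk' : k = (k - 1) + 1 := by omega
    rw [hk', Finset.sum_Icc_succ_top (by omega : 1 ≤ k - 1 + 1)]
    simp
  have hden : (p - ∑ j ∈ Finset.Icc 1 (k - 1), n j) - n k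
      = p - ∑ j ∈ Finset.Icc 1 k, n j := by rw [hsum_split]; ring
  -- step monotonicity
  have hstep : ∀ j < k, ρ (j + 1) ^ 2 ≤ ρ j ^ 2 := by
    intro j hj
    have := hρ_mono (j + 1) (Finset.mem_Icc.2 ⟨by omega, by omega⟩)
    simpa using this
  have hρle1 : ∀ j, j ≤ k → ρ j ^ 2 ≤ 1 := by
    intro j
    induction j with
    | zero => intro _; exact hρ0.le
    | succ m ih => intro h; exact (hstep m (by omega)).trans (ih (by omega))
  have hwnn : ∀ j, j ≤ k → 0 ≤ w j := by
    intro j hj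
    rcases Nat.eq_zero_or_pos j with h | h
    · simp [h, hw0]
    · exact (hw_pos j (Finset.mem_Icc.2 ⟨h, hj⟩)).le
  -- terms nonneg
  have hterm : ∀ j ∈ Finset.range (k + 1), 0 ≤ w j * (ρ j ^ 2 - ρ (j + 1) ^ 2) := by
    intro j hj
    have hj' : j ≤ k := by simpa using Nat.lt_succ_iff.mp (Finset.mem_range.mp hj)
    apply mul_nonneg (hwnn j hj')
    rcases lt_or_eq_of_le hj' with h | h
    · linarith [hstep j h]
    · rw [h, hρ_last]; simpa using sq_nonneg (ρ k)
  -- squares of sqrt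
  have hsq : ∑ j ∈ Finset.range (k + 1),
      (Real.sqrt (w j * (ρ j ^ 2 - ρ (j + 1) ^ 2))) ^ 2
      = ∑ j ∈ Finset.range (k + 1), w j * (ρ j ^ 2 - ρ (j + 1) ^ 2) :=
    Finset.sum_congr rfl fun j hj => Real.sq_sqrt (hterm j hj)
  -- Cauchy-Schwarz
  have hCS : (∑ j ∈ Finset.range (k + 1),
        Real.sqrt (w j * (ρ j ^ 2 - ρ (j + 1) ^ 2))) ^ 2
      ≤ (k + 1) * ∑ j ∈ Finset.range (k + 1), w j * (ρ j ^ 2 - ρ (j + 1) ^ 2) := by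
    have := sq_sum_le_card_mul_sum_sq
      (s := Finset.range (k + 1))
      (f := fun j => Real.sqrt (w j * (ρ j ^ 2 - ρ (j + 1) ^ 2)))
    rw [Finset.card_range, hsq] at this
    exact_mod_cast this
  -- sum bound
  have hsum_bound : ∑ j ∈ Finset.range (k + 1), w j * (ρ j ^ 2 - ρ (j + 1) ^ 2)
      ≤ (∑ j ∈ Finset.range (k - 1), w j * (1 - ρ (j + 1) ^ 2))
          + w (k - 1) * (cak * rak) + cck * rck := by
    have hk2 : k + 1 = (k - 1) + 1 + 1 := by omega
    have hk1 : k - 1 + 1 = k := by omega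
    rw [hk2, Finset.sum_range_succ, Finset.sum_range_succ, hk1]
    have h1 : ∑ j ∈ Finset.range (k - 1), w j * (ρ j ^ 2 - ρ (j + 1) ^ 2)
        ≤ ∑ j ∈ Finset.range (k - 1), w j * (1 - ρ (j + 1) ^ 2) := by
      apply Finset.sum_le_sum
      intro j hj
      have hj' : j ≤ k := by have := Finset.mem_range.mp hj; omega
      exact mul_le_mul_of_nonneg_left (by linarith [hρle1 j hj']) (hwnn j hj')
    have h2 : w (k - 1) * (ρ (k - 1) ^ 2 - ρ k ^ 2) ≤ w (k - 1) * (cak * rak) := by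
      apply mul_le_mul_of_nonneg_left _ (hwnn (k - 1) (by omega))
      have := hρle1 (k - 1) (by omega)
      linarith
    have h3 : w k * (ρ k ^ 2 - ρ (k + 1) ^ 2) ≤ cck * rck := by
      rw [hρ_last]
      have hρk0 : 0 ≤ ρ k ^ 2 := sq_nonneg _
      have hρk1 : ρ k ^ 2 ≤ 1 := hρle1 k le_rfl
      calc w k * (ρ k ^ 2 - 0 ^ 2) ≤ w k * 1 := by
            apply mul_le_mul_of_nonneg_left _ (hwnn k le_rfl); simpa using hρk1
        _ ≤ cck * rck := by simpa using hcost
    linarith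
  -- finish
  rw [hden]
  have hD : 0 < p - ∑ j ∈ Finset.Icc 1 k, n j := by linarith
  have hDnn : 0 ≤ σ0sq / (p - ∑ j ∈ Finset.Icc 1 k, n j) := div_nonneg hσ hD.le
  have key : (∑ j ∈ Finset.range (k + 1),
        Real.sqrt (w j * (ρ j ^ 2 - ρ (j + 1) ^ 2))) ^ 2
      ≤ (k + 1) * ((∑ j ∈ Finset.range (k - 1), w j * (1 - ρ (j + 1) ^ 2))
          + w (k - 1) * (cak * rak) + cck * rck) := by
    refine hCS.trans ?_
    exact mul_le_mul_of_nonneg_left hsum_bound (by positivity)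
  calc σ0sq / (p - ∑ j ∈ Finset.Icc 1 k, n j) *
        (∑ j ∈ Finset.range (k + 1), Real.sqrt (w j * (ρ j ^ 2 - ρ (j + 1) ^ 2))) ^ 2
      ≤ σ0sq / (p - ∑ j ∈ Finset.Icc 1 k, n j) *
        ((k + 1) * ((∑ j ∈ Finset.range (k - 1), w j * (1 - ρ (j + 1) ^ 2))
          + w (k - 1) * (cak * rak) + cck * rck)) :=
        mul_le_mul_of_nonneg_left key hDnn
    _ = (k + 1) * σ0sq / (p - ∑ j ∈ Finset.Icc 1 k, n j) *
        ((∑ j ∈ Finset.range (k - 1), w j * (1 - ρ (j + 1) ^ 2))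
          + w (k - 1) * (cak * rak) + cck * rck) := by ring
end

section
/- Let P > 2 be a real number, let κ ≥ 0 and ĉ_a, c_c > 0 be constants, let r_a be an accuracy rate and r_c a cost rate, and assume that ĉ_a·r_a''(n) + c_c·r_c''(n) > 0 for all n ∈ [1, P−1]. Then the function u : [1, P−1] → (0, ∞), u(n) = (κ + ĉ_a·r_a(n) + c_c·r_c(n))/(P − n), attains its global minimum over [1, P−1] at a unique point n* ∈ [1, P−1]. (This is the single iteration step of Proposition 3.4: at iteration j of the sequential context-aware construction, P = p_{j−1} is the remaining budget, κ = κ_{j−1} ≥ 0 is fixed by the previously trained models, and ĉ_a = w_{j−1}(n_{j−1}*)·c_{a,j}.) -/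
open Set Filter Topology

/-!
If `n⋆` minimises `u = g / (P - ·)` with value `m`, then `n⋆` is a zero and a minimiser of
`g - m (P - ·)`, which differs from `g` by an affine function. The convexity condition says that
`g = κ + ĉₐ rₐ + c_c r_c` has positive second derivative, so `g - m (P - ·)` is strictly convex and
has at most one minimiser; a second minimiser of `u` would be a second one of it.
-/

theorem ContDiffOn.deriv_iterate_two_const_add_mul_add_mul {U : Set ℝ} (hU : IsOpen U)
    {f g : ℝ → ℝ} (hf : ContDiffOn ℝ 2 f U) (hg : ContDiffOn ℝ 2 g U) (κ a b : ℝ) {x : ℝ}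
    (hx : x ∈ U) :
    deriv^[2] (fun y => κ + a * f y + b * g y) x = a * deriv^[2] f x + b * deriv^[2] g x := by
  have hdiff : ∀ {h : ℝ → ℝ}, ContDiffOn ℝ 1 h U → ∀ y ∈ U, DifferentiableAt ℝ h y :=
    fun hh y hy => (hh.differentiableOn one_ne_zero).differentiableAt (hU.mem_nhds hy)
  have hdiff' : ∀ {h : ℝ → ℝ}, ContDiffOn ℝ 2 h U → DifferentiableAt ℝ (deriv h) x :=
    fun hh => hdiff (hh.deriv_of_isOpen hU (by norm_num)) x hx
  have hderiv : deriv (fun y => κ + a * f y + b * g y) =ᶠ[𝓝 x]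
      fun y => a * deriv f y + b * deriv g y := by
    filter_upwards [hU.mem_nhds hx] with y hy
    exact ((((hdiff (hf.of_le one_le_two) y hy).hasDerivAt.const_mul a).const_add κ).add
      ((hdiff (hg.of_le one_le_two) y hy).hasDerivAt.const_mul b)).deriv
  simp only [Function.iterate_succ, Function.iterate_zero, Function.comp_apply, id]
  rw [hderiv.deriv_eq]
  exact (((hdiff' hf).hasDerivAt.const_mul a).add ((hdiff' hg).hasDerivAt.const_mul b)).deriv

theorem IsMinOn.isMinOn_sub_mul_const_sub {s : Set ℝ} {g : ℝ → ℝ} {P c : ℝ}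
    (hsP : ∀ x ∈ s, x < P) (hc : c ∈ s) (hmin : IsMinOn (fun x => g x / (P - x)) s c) :
    IsMinOn (fun x => g x - g c / (P - c) * (P - x)) s c := by
  intro x hx
  have hxP : 0 < P - x := sub_pos.2 (hsP x hx)
  have hcP : P - c ≠ 0 := (sub_pos.2 (hsP c hc)).ne'
  have hle : g c / (P - c) * (P - x) ≤ g x := (le_div_iff₀ hxP).1 (hmin hx)
  simp only [mem_ofPred_eq, div_mul_cancel₀ _ hcP, sub_self]
  linarith

theorem StrictConvexOn.eq_of_isMinOn_div_const_sub_s3 {s : Set ℝ} {g : ℝ → ℝ} {P a b : ℝ}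
    (hg : StrictConvexOn ℝ s g) (hsP : ∀ x ∈ s, x < P) (ha : a ∈ s) (hb : b ∈ s)
    (hmin_a : IsMinOn (fun x => g x / (P - x)) s a)
    (hmin_b : IsMinOn (fun x => g x / (P - x)) s b) : a = b := by
  set m := g a / (P - a)
  have hm : g b / (P - b) = m := le_antisymm (hmin_b ha) (hmin_a hb)
  have haffine : ConcaveOn ℝ s fun x => m * (P - x) :=
    ⟨hg.1, fun x _ y _ μ ν _ _ hμν => le_of_eq <| by
      simp only [smul_eq_mul]; linear_combination m * P * hμν⟩
  have hb' := hmin_b.isMinOn_sub_mul_const_sub hsP hb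
  rw [hm] at hb'
  exact (hg.sub_concaveOn haffine).eq_of_isMinOn (hmin_a.isMinOn_sub_mul_const_sub hsP ha) hb' ha hb

theorem stmt_3_general
    (P κ ca cc : ℝ) (ra rc : ℝ → ℝ)
    (hP : 2 < P)
    (hra_smooth : ContDiffOn ℝ 2 ra (Ioi 0))
    (hrc_smooth : ContDiffOn ℝ 2 rc (Ioi 0))
    -- strict convexity condition (3.16)
    (hconv : ∀ n ∈ Icc (1 : ℝ) (P - 1),
      0 < ca * deriv (deriv ra) n + cc * deriv (deriv rc) n) :
    ∃ nstar ∈ Icc (1 : ℝ) (P - 1),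
      (∀ n ∈ Icc (1 : ℝ) (P - 1),
        (κ + ca * ra nstar + cc * rc nstar) / (P - nstar) ≤
          (κ + ca * ra n + cc * rc n) / (P - n)) ∧
      (∀ n ∈ Icc (1 : ℝ) (P - 1), n ≠ nstar →
        (κ + ca * ra nstar + cc * rc nstar) / (P - nstar) <
          (κ + ca * ra n + cc * rc n) / (P - n)) := by
  set g : ℝ → ℝ := fun n => κ + ca * ra n + cc * rc n
  have hIcc_pos : Icc (1 : ℝ) (P - 1) ⊆ Ioi 0 := fun x hx => one_pos.trans_le hx.1
  have hIcc_lt : ∀ x ∈ Icc (1 : ℝ) (P - 1), x < P := fun x hx => by linarith [hx.2]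
  have hg_cont : ContinuousOn g (Icc 1 (P - 1)) :=
    (continuousOn_const.add (hra_smooth.continuousOn.const_smul ca)).add
      (hrc_smooth.continuousOn.const_smul cc) |>.mono hIcc_pos
  have hg_convex : StrictConvexOn ℝ (Icc 1 (P - 1)) g :=
    strictConvexOn_of_deriv2_pos' (convex_Icc _ _) hg_cont fun x hx => by
      rw [hra_smooth.deriv_iterate_two_const_add_mul_add_mul isOpen_Ioi hrc_smooth κ ca cc
        (hIcc_pos hx)]
      exact hconv x hx
  have hu_cont : ContinuousOn (fun x => g x / (P - x)) (Icc 1 (P - 1)) :=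
    hg_cont.div (continuousOn_const.sub continuousOn_id) fun x hx => (sub_pos.2 (hIcc_lt x hx)).ne'
  obtain ⟨nstar, hnstar, hmin⟩ :=
    isCompact_Icc.exists_isMinOn (nonempty_Icc.2 (by linarith)) hu_cont
  refine ⟨nstar, hnstar, fun n hn => hmin hn, fun n hn hne => (hmin hn).lt_of_ne fun heq => hne ?_⟩
  exact hg_convex.eq_of_isMinOn_div_const_sub_s3 hIcc_lt hn hnstar
    (fun x hx => heq.symm.trans_le (hmin hx)) hmin

/-- Proposition 3.4 (single iteration step): existence and uniqueness of the global minimizer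
of the iteration objective `u(n) = (κ + ĉₐ·rₐ(n) + c_c·r_c(n))/(P − n)` on `[1, P−1]`. -/
theorem stmt_3
    (P κ ca cc : ℝ) (ra rc : ℝ → ℝ)
    (hP : 2 < P) (hκ : 0 ≤ κ) (hca : 0 < ca) (hcc : 0 < cc)
    -- `ra` is an accuracy rate: positive, decreasing, twice continuously differentiable on `(0, ∞)`
    (hra_pos : ∀ x ∈ Ioi (0 : ℝ), 0 < ra x)
    (hra_anti : StrictAntiOn ra (Ioi 0))
    (hra_smooth : ContDiffOn ℝ 2 ra (Ioi 0))
    -- `rc` is a cost rate: positive, increasing, twice continuously differentiable on `(0, ∞)`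
    (hrc_pos : ∀ x ∈ Ioi (0 : ℝ), 0 < rc x)
    (hrc_mono : StrictMonoOn rc (Ioi 0))
    (hrc_smooth : ContDiffOn ℝ 2 rc (Ioi 0))
    -- strict convexity condition (3.16)
    (hconv : ∀ n ∈ Icc (1 : ℝ) (P - 1),
      0 < ca * deriv (deriv ra) n + cc * deriv (deriv rc) n) :
    ∃ nstar ∈ Icc (1 : ℝ) (P - 1),
      (∀ n ∈ Icc (1 : ℝ) (P - 1),
        (κ + ca * ra nstar + cc * rc nstar) / (P - nstar) ≤
          (κ + ca * ra n + cc * rc n) / (P - n)) ∧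
      (∀ n ∈ Icc (1 : ℝ) (P - 1), n ≠ nstar →
        (κ + ca * ra nstar + cc * rc nstar) / (P - nstar) <
          (κ + ca * ra n + cc * rc n) / (P - n)) :=
  stmt_3_general P κ ca cc ra rc hP hra_smooth hrc_smooth hconv
end

section
/- Let κ ≥ 0 and ĉ_a, c_c > 0 be constants, let r_a be an accuracy rate and r_c a cost rate, and assume that ĉ_a·r_a''(n) + c_c·r_c''(n) > 0 for all n ∈ (0, ∞). Suppose there exists n̄ ∈ (0, ∞) such that ĉ_a·r_a'(n̄) + c_c·r_c'(n̄) = 0. Then for every budget P > 2, any global minimizer n* on [1, P−1] of the function u(n) = (κ + ĉ_a·r_a(n) + c_c·r_c(n))/(P − n) satisfies n* ≤ max{1, n̄}; in particular the minimizer is bounded from above independently of the budget P. (This is the induction step of Proposition 3.5.) -/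
open Set

/-!
The numerator `f = ĉₐ·rₐ + c_c·r_c` has strictly increasing derivative on `(0, ∞)`, vanishing at
`n̄`, so `f` is strictly increasing on `[n̄, ∞)`. If a minimizer `n*` of `f(n)/(P − n)` lay beyond
`m = max 1 n̄`, then moving to `m` would both decrease the (nonnegative) numerator and increase
the denominator, strictly decreasing the objective.
-/

lemma ContDiffOn.differentiableAt_deriv {f : ℝ → ℝ} {s : Set ℝ} {x : ℝ}
    (hf : ContDiffOn ℝ 2 f s) (hs : IsOpen s) (hx : x ∈ s) :
    DifferentiableAt ℝ (deriv f) x := by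
  have hf : ContDiffOn ℝ (1 + 1) f s := hf
  exact (((contDiffOn_succ_iff_deriv_of_isOpen hs).mp hf).2.2.differentiableOn one_ne_zero)
    |>.differentiableAt (hs.mem_nhds hx)

lemma deriv_const_mul_add_const_mul {f g : ℝ → ℝ} {x : ℝ} (a b : ℝ)
    (hf : DifferentiableAt ℝ f x) (hg : DifferentiableAt ℝ g x) :
    deriv (fun y => a * f y + b * g y) x = a * deriv f x + b * deriv g x :=
  ((hf.hasDerivAt.const_mul a).add (hg.hasDerivAt.const_mul b)).deriv

lemma strictMonoOn_inter_Ici_of_deriv2_pos {f : ℝ → ℝ} {s : Set ℝ} {a : ℝ}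
    (hs : IsOpen s) (hs' : Convex ℝ s) (hf : ContDiffOn ℝ 2 f s)
    (hf'' : ∀ x ∈ s, 0 < deriv (deriv f) x) (ha : a ∈ s) (hf'a : deriv f a = 0) :
    StrictMonoOn f (s ∩ Ici a) := by
  have hf'_mono : StrictMonoOn (deriv f) s :=
    strictMonoOn_of_deriv_pos hs'
      (fun x hx => (hf.differentiableAt_deriv hs hx).continuousAt.continuousWithinAt)
      (fun x hx => hf'' x (interior_subset hx))
  refine strictMonoOn_of_deriv_pos (hs'.inter (convex_Ici a))
    (hf.continuousOn.mono inter_subset_left) fun x hx => ?_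
  rw [interior_inter, hs.interior_eq, interior_Ici] at hx
  rw [← hf'a]
  exact hf'_mono ha hx.1 hx.2

lemma le_of_isMinOn_div_sub {N : ℝ → ℝ} {m P nstar : ℝ} (hm : 1 ≤ m)
    (hN : 0 ≤ N m) (hN_mono : StrictMonoOn N (Ici m)) (hnstar : nstar ≤ P - 1)
    (hmin : IsMinOn (fun n => N n / (P - n)) (Icc 1 (P - 1)) nstar) :
    nstar ≤ m := by
  by_contra! hlt
  have hm_mem : m ∈ Icc 1 (P - 1) := ⟨hm, by linarith⟩
  have hN_lt : N m < N nstar := hN_mono self_mem_Ici hlt.le hlt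
  have : N m / (P - m) < N nstar / (P - nstar) :=
    div_lt_div₀ hN_lt (by linarith) (hN.trans hN_lt.le) (by linarith)
  exact (hmin hm_mem).not_gt this

theorem stmt_4_general
    (κ ca cc : ℝ) (ra rc : ℝ → ℝ) (nbar : ℝ)
    (hκ : 0 ≤ κ) (hca : 0 < ca) (hcc : 0 < cc)
    -- `ra` is an accuracy rate: positive, decreasing, twice continuously differentiable on `(0, ∞)`
    (hra_pos : ∀ x ∈ Ioi (0 : ℝ), 0 < ra x)
    (hra_smooth : ContDiffOn ℝ 2 ra (Ioi 0))
    -- `rc` is a cost rate: positive, increasing, twice continuously differentiable on `(0, ∞)`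
    (hrc_pos : ∀ x ∈ Ioi (0 : ℝ), 0 < rc x)
    (hrc_smooth : ContDiffOn ℝ 2 rc (Ioi 0))
    -- strict convexity on all of `(0, ∞)`
    (hconv : ∀ n ∈ Ioi (0 : ℝ),
      0 < ca * deriv (deriv ra) n + cc * deriv (deriv rc) n)
    -- existence of a stationary point `n̄` of the numerator
    (hnbar : nbar ∈ Ioi (0 : ℝ))
    (hstat : ca * deriv ra nbar + cc * deriv rc nbar = 0) :
    ∀ P : ℝ, 2 < P → ∀ nstar ∈ Icc (1 : ℝ) (P - 1),
      (∀ n ∈ Icc (1 : ℝ) (P - 1),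
        (κ + ca * ra nstar + cc * rc nstar) / (P - nstar) ≤
          (κ + ca * ra n + cc * rc n) / (P - n)) →
      nstar ≤ max 1 nbar := by
  intro P _ nstar hnstar hmin
  set f : ℝ → ℝ := fun n => ca * ra n + cc * rc n
  have hf_smooth : ContDiffOn ℝ 2 f (Ioi 0) :=
    (contDiffOn_const.mul hra_smooth).add (contDiffOn_const.mul hrc_smooth)
  have hf' : EqOn (deriv f) (fun x => ca * deriv ra x + cc * deriv rc x) (Ioi 0) :=
    fun x hx => deriv_const_mul_add_const_mul ca cc
      ((hra_smooth.differentiableOn two_ne_zero).differentiableAt (Ioi_mem_nhds hx))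
      ((hrc_smooth.differentiableOn two_ne_zero).differentiableAt (Ioi_mem_nhds hx))
  have hf'' : ∀ x ∈ Ioi (0 : ℝ), 0 < deriv (deriv f) x := by
    intro x hx
    rw [(hf'.eventuallyEq_of_mem (Ioi_mem_nhds hx)).deriv_eq,
      deriv_const_mul_add_const_mul ca cc (hra_smooth.differentiableAt_deriv isOpen_Ioi hx)
        (hrc_smooth.differentiableAt_deriv isOpen_Ioi hx)]
    exact hconv x hx
  have hf_mono : StrictMonoOn f (Ioi 0 ∩ Ici nbar) :=
    strictMonoOn_inter_Ici_of_deriv2_pos isOpen_Ioi (convex_Ioi 0) hf_smooth hf'' hnbar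
      ((hf' hnbar).trans hstat)
  have hm_pos : (0 : ℝ) < max 1 nbar := zero_lt_one.trans_le (le_max_left 1 nbar)
  have hIci_sub : Ici (max 1 nbar) ⊆ Ioi 0 ∩ Ici nbar :=
    fun x hx => ⟨hm_pos.trans_le hx, (le_max_right 1 nbar).trans hx⟩
  refine le_of_isMinOn_div_sub (N := fun n => κ + f n) (le_max_left 1 nbar) ?_ ?_ hnstar.2
    (isMinOn_iff.mpr fun n hn => by simpa only [f, add_assoc] using hmin n hn)
  · have := hra_pos _ hm_pos
    have := hrc_pos _ hm_pos
    positivity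
  · exact fun x hx y hy hxy => add_lt_add_right (hf_mono (hIci_sub hx) (hIci_sub hy) hxy) κ

/-- Proposition 3.5 (induction step): any global minimizer of the iteration objective
`u(n) = (κ + ĉₐ·rₐ(n) + c_c·r_c(n))/(P − n)` on `[1, P−1]` is bounded above by `max 1 n̄`,
independently of the budget `P`. -/
theorem stmt_4
    (κ ca cc : ℝ) (ra rc : ℝ → ℝ) (nbar : ℝ)
    (hκ : 0 ≤ κ) (hca : 0 < ca) (hcc : 0 < cc)
    -- `ra` is an accuracy rate: positive, decreasing, twice continuously differentiable on `(0, ∞)`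
    (hra_pos : ∀ x ∈ Ioi (0 : ℝ), 0 < ra x)
    (hra_anti : StrictAntiOn ra (Ioi 0))
    (hra_smooth : ContDiffOn ℝ 2 ra (Ioi 0))
    -- `rc` is a cost rate: positive, increasing, twice continuously differentiable on `(0, ∞)`
    (hrc_pos : ∀ x ∈ Ioi (0 : ℝ), 0 < rc x)
    (hrc_mono : StrictMonoOn rc (Ioi 0))
    (hrc_smooth : ContDiffOn ℝ 2 rc (Ioi 0))
    -- strict convexity on all of `(0, ∞)`
    (hconv : ∀ n ∈ Ioi (0 : ℝ),
      0 < ca * deriv (deriv ra) n + cc * deriv (deriv rc) n)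
    -- existence of a stationary point `n̄` of the numerator
    (hnbar : nbar ∈ Ioi (0 : ℝ))
    (hstat : ca * deriv ra nbar + cc * deriv rc nbar = 0) :
    ∀ P : ℝ, 2 < P → ∀ nstar ∈ Icc (1 : ℝ) (P - 1),
      (∀ n ∈ Icc (1 : ℝ) (P - 1),
        (κ + ca * ra nstar + cc * rc nstar) / (P - nstar) ≤
          (κ + ca * ra n + cc * rc n) / (P - n)) →
      nstar ≤ max 1 nbar :=
  stmt_4_general κ ca cc ra rc nbar hκ hca hcc hra_pos hra_smooth hrc_pos hrc_smooth hconv hnbar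
    hstat
end
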